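/- Let P be a Hermitian matrix on (ℂ²)^{⊗n} with Pauli expansion P = ∑_x P̂(x)σ_x, and define P' = ∑_x ρ^{|x|} P̂(x)σ_x where |x| is the number of non-identity tensor factors. Then for Hermitian P, Q on (ℂ²)^{⊗n}: tr((P⊗Q)(Δ_ρ(Φ))^{⊗n}) = ∑_x ρ^{|x|} P̂(x)Q̂(x) = tr((P⊗Q')Φ^{⊗n}) = tr((P'⊗Q)Φ^{⊗n}), where the Pauli expansion of Q is taken in the basis {I, X, Ȳ, Z} (complex conjugate of Y). -/
import Mathlib


open Matrix

noncomputable def pauliX : Matrix (Fin 2) (Fin 2) ℂ := !![0, 1; 1, 0]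
noncomputable def pauliY : Matrix (Fin 2) (Fin 2) ℂ := !![0, -Complex.I; Complex.I, 0]
noncomputable def pauliYbar : Matrix (Fin 2) (Fin 2) ℂ := !![0, Complex.I; -Complex.I, 0]
noncomputable def pauliZ : Matrix (Fin 2) (Fin 2) ℂ := !![1, 0; 0, -1]

/-- Alice's single-qubit basis `{I, X, Y, Z}`. -/
noncomputable def basisA : Fin 4 → Matrix (Fin 2) (Fin 2) ℂ := ![1, pauliX, pauliY, pauliZ]

/-- Bob's single-qubit basis `{I, X, Ȳ, Z}` (`Ȳ` the entrywise conjugate of `Y`). -/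
noncomputable def basisB : Fin 4 → Matrix (Fin 2) (Fin 2) ℂ := ![1, pauliX, pauliYbar, pauliZ]

/-- The `n`-fold tensor basis element `σ_x = ⊗ᵢ σ_{xᵢ}`. -/
noncomputable def sigma {n : ℕ} (basis : Fin 4 → Matrix (Fin 2) (Fin 2) ℂ)
    (x : Fin n → Fin 4) : Matrix (Fin n → Fin 2) (Fin n → Fin 2) ℂ :=
  fun a b => ∏ i, basis (x i) (a i) (b i)

/-- Pauli coefficient `P̂(x) = tr(σ_x P)/2ⁿ`. -/
noncomputable def coeff {n : ℕ} (basis : Fin 4 → Matrix (Fin 2) (Fin 2) ℂ)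
    (P : Matrix (Fin n → Fin 2) (Fin n → Fin 2) ℂ) (x : Fin n → Fin 4) : ℂ :=
  ((sigma basis x * P).trace) / 2 ^ n

/-- Degree `|x|`: the number of non-identity tensor factors. -/
def xdeg {n : ℕ} (x : Fin n → Fin 4) : ℕ := (Finset.univ.filter fun i => x i ≠ 0).card

/-- The noisy observable `P' = ∑_x ρ^{|x|} P̂(x) σ_x`. -/
noncomputable def noisy {n : ℕ} (basis : Fin 4 → Matrix (Fin 2) (Fin 2) ℂ) (ρ : ℝ)
    (P : Matrix (Fin n → Fin 2) (Fin n → Fin 2) ℂ) :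
    Matrix (Fin n → Fin 2) (Fin n → Fin 2) ℂ :=
  ∑ x, ((ρ : ℂ) ^ xdeg x * coeff basis P x) • sigma basis x

noncomputable def eprMat : Matrix (Fin 2 × Fin 2) (Fin 2 × Fin 2) ℂ :=
  fun p q => if p.1 = p.2 ∧ q.1 = q.2 then (1 / 2 : ℂ) else 0

noncomputable def depEPR (ρ : ℝ) : Matrix (Fin 2 × Fin 2) (Fin 2 × Fin 2) ℂ :=
  (ρ : ℂ) • eprMat + (((1 - ρ) / 4 : ℝ) : ℂ) • 1

noncomputable def depEPRn (ρ : ℝ) (n : ℕ) :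
    Matrix ((Fin n → Fin 2) × (Fin n → Fin 2)) ((Fin n → Fin 2) × (Fin n → Fin 2)) ℂ :=
  fun x y => ∏ i, depEPR ρ (x.1 i, x.2 i) (y.1 i, y.2 i)

noncomputable def bkron {n : ℕ} (P Q : Matrix (Fin n → Fin 2) (Fin n → Fin 2) ℂ) :
    Matrix ((Fin n → Fin 2) × (Fin n → Fin 2)) ((Fin n → Fin 2) × (Fin n → Fin 2)) ℂ :=
  fun x y => P x.1 y.1 * Q x.2 y.2

/-! ### Auxiliary lemmas -/

lemma depEPR_eq (ρ : ℝ) (a b c d : Fin 2) :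
    depEPR ρ (a, b) (c, d) =
      (1/4 : ℂ) * ∑ k : Fin 4, (if k = 0 then 1 else (ρ : ℂ)) * basisA k a c * basisB k b d := by
  fin_cases a <;> fin_cases b <;> fin_cases c <;> fin_cases d <;>
    simp [depEPR, eprMat, basisA, basisB, pauliX, pauliY, pauliYbar, pauliZ,
      Fin.sum_univ_four, Matrix.one_apply, Prod.ext_iff] <;> ring_nf <;>
    simp [Complex.I_sq] <;> ring

lemma orthoA (k l : Fin 4) :
    (∑ a : Fin 2, ∑ c : Fin 2, basisA k a c * basisA l c a) = if k = l then 2 else 0 := by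
  fin_cases k <;> fin_cases l <;>
    simp [basisA, pauliX, pauliY, pauliZ, Fin.sum_univ_two, Matrix.one_apply] <;> ring

lemma orthoB (k l : Fin 4) :
    (∑ a : Fin 2, ∑ c : Fin 2, basisB k a c * basisB l c a) = if k = l then 2 else 0 := by
  fin_cases k <;> fin_cases l <;>
    simp [basisB, pauliX, pauliYbar, pauliZ, Fin.sum_univ_two, Matrix.one_apply] <;> ring

lemma prod_ite_rho {n : ℕ} (ρ : ℂ) (x : Fin n → Fin 4) :
    (∏ i, if x i = 0 then 1 else ρ) = ρ ^ xdeg x := by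
  rw [Finset.prod_ite, Finset.prod_const_one, one_mul, Finset.prod_const, xdeg]

lemma sigma_ortho {n : ℕ} (basis : Fin 4 → Matrix (Fin 2) (Fin 2) ℂ)
    (h : ∀ k l : Fin 4, (∑ a : Fin 2, ∑ c : Fin 2, basis k a c * basis l c a)
      = if k = l then 2 else 0) (x y : Fin n → Fin 4) :
    (sigma basis x * sigma basis y).trace = if x = y then (2 : ℂ) ^ n else 0 := by
  have key : (sigma basis x * sigma basis y).trace
      = ∏ i, ∑ a : Fin 2, ∑ c : Fin 2, basis (x i) a c * basis (y i) c a := by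
    simp only [Matrix.trace, Matrix.diag, Matrix.mul_apply, sigma,
      ← Finset.prod_mul_distrib, ← Fintype.piFinset_univ]
    have h1 : ∀ p : Fin n → Fin 2,
        (∑ q ∈ Fintype.piFinset fun _ => (Finset.univ : Finset (Fin 2)),
          ∏ i, basis (x i) (p i) (q i) * basis (y i) (q i) (p i))
        = ∏ i, ∑ b : Fin 2, basis (x i) (p i) b * basis (y i) b (p i) :=
      fun p => (Finset.prod_univ_sum (fun _ => Finset.univ)
        (fun i b => basis (x i) (p i) b * basis (y i) b (p i))).symm
    simp_rw [h1]
    exact (Finset.prod_univ_sum (fun _ => Finset.univ)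
      (fun i a => ∑ b : Fin 2, basis (x i) a b * basis (y i) b a)).symm
  rw [key]
  simp only [h]
  by_cases hxy : x = y
  · subst hxy; simp
  · obtain ⟨i, hi⟩ := Function.ne_iff.mp hxy
    rw [if_neg hxy]
    exact Finset.prod_eq_zero (Finset.mem_univ i) (if_neg hi)

lemma coeff_noisy {n : ℕ} (basis : Fin 4 → Matrix (Fin 2) (Fin 2) ℂ)
    (h : ∀ k l : Fin 4, (∑ a : Fin 2, ∑ c : Fin 2, basis k a c * basis l c a)
      = if k = l then 2 else 0) (ρ : ℝ) (Q : Matrix (Fin n → Fin 2) (Fin n → Fin 2) ℂ)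
    (x : Fin n → Fin 4) :
    coeff basis (noisy basis ρ Q) x = (ρ : ℂ) ^ xdeg x * coeff basis Q x := by
  have h2 : (2 : ℂ) ^ n ≠ 0 := pow_ne_zero _ two_ne_zero
  simp only [coeff, noisy, Matrix.mul_sum, Matrix.mul_smul, Matrix.trace_sum,
    Matrix.trace_smul, smul_eq_mul, sigma_ortho basis h, mul_ite, mul_zero]
  rw [Finset.sum_ite_eq, if_pos (Finset.mem_univ x)]
  field_simp

lemma factor2 {α : Type*} [Fintype α] (f g : α → α → ℂ) :
    (∑ p : α × α, ∑ q : α × α, f p.1 q.1 * g p.2 q.2)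
      = (∑ a, ∑ c, f a c) * (∑ b, ∑ d, g b d) := by
  have h1 : (∑ a, ∑ c, f a c) = ∑ r : α × α, f r.1 r.2 :=
    (Fintype.sum_prod_type (f := fun r : α × α => f r.1 r.2)).symm
  have h2 : (∑ b, ∑ d, g b d) = ∑ r : α × α, g r.1 r.2 :=
    (Fintype.sum_prod_type (f := fun r : α × α => g r.1 r.2)).symm
  rw [h1, h2, Finset.sum_mul_sum]
  have h4 : (∑ i : α × α, ∑ j : α × α, f i.1 i.2 * g j.1 j.2)
      = ∑ r : (α × α) × (α × α), f r.1.1 r.1.2 * g r.2.1 r.2.2 :=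
    (Fintype.sum_prod_type (f := fun r : (α × α) × (α × α) => f r.1.1 r.1.2 * g r.2.1 r.2.2)).symm
  rw [h4]
  have h3 : (∑ p : α × α, ∑ q : α × α, f p.1 q.1 * g p.2 q.2)
      = ∑ r : (α × α) × (α × α), f r.1.1 r.2.1 * g r.1.2 r.2.2 :=
    (Fintype.sum_prod_type (f := fun r : (α × α) × (α × α) => f r.1.1 r.2.1 * g r.1.2 r.2.2)).symm
  rw [h3]
  exact Fintype.sum_equiv (Equiv.prodProdProdComm α α α α) _ _ (fun s => rfl)

lemma depEPRn_eq {n : ℕ} (ρ : ℝ) (p q : (Fin n → Fin 2) × (Fin n → Fin 2)) :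
    depEPRn ρ n p q = ∑ x : Fin n → Fin 4,
      ((1/4 : ℂ) ^ n * (ρ : ℂ) ^ xdeg x) *
        (sigma basisA x p.1 q.1 * sigma basisB x p.2 q.2) := by
  unfold depEPRn
  simp_rw [depEPR_eq]
  rw [Finset.prod_mul_distrib, Finset.prod_const, ← Fintype.piFinset_univ,
    Finset.prod_univ_sum (fun _ => Finset.univ)
      (fun i k => (if k = 0 then 1 else (ρ : ℂ)) * basisA k (p.1 i) (q.1 i)
        * basisB k (p.2 i) (q.2 i)),
    Finset.mul_sum]
  refine Finset.sum_congr rfl fun x _ => ?_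
  rw [Finset.prod_mul_distrib, Finset.prod_mul_distrib, prod_ite_rho]
  simp only [sigma, Finset.card_univ, Fintype.card_fin]
  ring

lemma core {n : ℕ} (ρ : ℝ) (P Q : Matrix (Fin n → Fin 2) (Fin n → Fin 2) ℂ) :
    (bkron P Q * depEPRn ρ n).trace =
      ∑ x : Fin n → Fin 4, (ρ : ℂ) ^ xdeg x * coeff basisA P x * coeff basisB Q x := by
  have h2 : (2 : ℂ) ^ n ≠ 0 := pow_ne_zero _ two_ne_zero
  have step1 : (bkron P Q * depEPRn ρ n).trace
      = ∑ p : (Fin n → Fin 2) × (Fin n → Fin 2), ∑ q : (Fin n → Fin 2) × (Fin n → Fin 2), ∑ x : Fin n → Fin 4,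
          ((1/4 : ℂ) ^ n * (ρ : ℂ) ^ xdeg x) *
            ((P p.1 q.1 * sigma basisA x q.1 p.1) * (Q p.2 q.2 * sigma basisB x q.2 p.2)) := by
    simp only [Matrix.trace, Matrix.diag, Matrix.mul_apply, bkron]
    refine Finset.sum_congr rfl fun p _ => Finset.sum_congr rfl fun q _ => ?_
    rw [depEPRn_eq, Finset.mul_sum]
    exact Finset.sum_congr rfl fun x _ => by ring
  rw [step1]
  have swap1 : ∀ p : (Fin n → Fin 2) × (Fin n → Fin 2),
      (∑ q : (Fin n → Fin 2) × (Fin n → Fin 2), ∑ x : Fin n → Fin 4,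
        ((1/4 : ℂ) ^ n * (ρ : ℂ) ^ xdeg x) *
          ((P p.1 q.1 * sigma basisA x q.1 p.1) * (Q p.2 q.2 * sigma basisB x q.2 p.2)))
      = ∑ x : Fin n → Fin 4, ∑ q : (Fin n → Fin 2) × (Fin n → Fin 2),
        ((1/4 : ℂ) ^ n * (ρ : ℂ) ^ xdeg x) *
          ((P p.1 q.1 * sigma basisA x q.1 p.1) * (Q p.2 q.2 * sigma basisB x q.2 p.2)) :=
    fun p => Finset.sum_comm
  simp_rw [swap1]
  rw [Finset.sum_comm]
  refine Finset.sum_congr rfl fun x _ => ?_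
  simp_rw [← Finset.mul_sum]
  rw [factor2 (fun a c => P a c * sigma basisA x c a) (fun b d => Q b d * sigma basisB x d b)]
  have trA : (∑ a, ∑ c, P a c * sigma basisA x c a) = (sigma basisA x * P).trace := by
    simp only [Matrix.trace, Matrix.diag, Matrix.mul_apply]
    rw [Finset.sum_comm]
    exact Finset.sum_congr rfl fun c _ => Finset.sum_congr rfl fun a _ => mul_comm _ _
  have trB : (∑ b, ∑ d, Q b d * sigma basisB x d b) = (sigma basisB x * Q).trace := by
    simp only [Matrix.trace, Matrix.diag, Matrix.mul_apply]
    rw [Finset.sum_comm]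
    exact Finset.sum_congr rfl fun d _ => Finset.sum_congr rfl fun b _ => mul_comm _ _
  rw [trA, trB, coeff, coeff]
  have h44 : (4 : ℂ) = 2 * 2 := by norm_num
  rw [div_pow, one_pow, h44, mul_pow]
  field_simp

/-- For Hermitian `P, Q` on `(ℂ²)^{⊗n}`, with `P` expanded in the basis
`{I,X,Y,Z}` and `Q` in the basis `{I,X,Ȳ,Z}`,
`tr((P⊗Q)(Δ_ρΦ)^{⊗n}) = ∑_x ρ^{|x|} P̂(x) Q̂(x) = tr((P⊗Q')Φ^{⊗n}) = tr((P'⊗Q)Φ^{⊗n})`. -/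
theorem stmt19 (n : ℕ) (ρ : ℝ) (hρ0 : 0 ≤ ρ) (hρ1 : ρ ≤ 1)
    (P Q : Matrix (Fin n → Fin 2) (Fin n → Fin 2) ℂ)
    (hP : P.IsHermitian) (hQ : Q.IsHermitian) :
    (bkron P Q * depEPRn ρ n).trace =
        ∑ x : Fin n → Fin 4, (ρ : ℂ) ^ xdeg x * coeff basisA P x * coeff basisB Q x ∧
    (bkron P Q * depEPRn ρ n).trace = (bkron P (noisy basisB ρ Q) * depEPRn 1 n).trace ∧
    (bkron P Q * depEPRn ρ n).trace = (bkron (noisy basisA ρ P) Q * depEPRn 1 n).trace := by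
  refine ⟨core ρ P Q, ?_, ?_⟩
  · rw [core ρ P Q, core 1 P (noisy basisB ρ Q)]
    refine Finset.sum_congr rfl fun x _ => ?_
    rw [coeff_noisy basisB orthoB ρ Q x]
    push_cast
    ring
  · rw [core ρ P Q, core 1 (noisy basisA ρ P) Q]
    refine Finset.sum_congr rfl fun x _ => ?_
    have hnA : coeff basisA (noisy basisA ρ P) x = (ρ : ℂ) ^ xdeg x * coeff basisA P x :=
      coeff_noisy basisA orthoA ρ P x
    rw [hnA]
    push_cast
    ring
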